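/- Let (X, S) ~ π be a random pair on 𝒳 × 𝒮, W = S − X, and let Y be generated by a conditional pmf a(y | x, s) with a(𝒴₀(s − x) | x, s) = 1. Define ξ(w) = Σ_{(x,s): s−x=w} π(x,s), b(y | w) = Σ_{(x,s): s−x=w} a(y | x,s) π(x,s) / ξ(w) (for ξ(w) > 0), and ã(y | x, s) = b(y | s − x). Let Ỹ be generated from (X, S) by ã instead of a. Then: (1) the joint law of (W, Y) equals the joint law of (W, Ỹ); in particular Y and Ỹ have the same marginal law; (2) with S₊ = W + Y and S̃₊ = W + Ỹ, the conditional law of S₊ given Y equals the conditional law of S̃₊ given Ỹ; (3) I(X, S; Y) ≥ I(W; Y) = I(X, S; Ỹ) = I(W; Ỹ) = I(b; ξ). -/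

import Mathlib

open Finset
open scoped Classical

namespace SmartMeter

/-! ### Basic information measures for finitely supported distributions.
All entropies and mutual informations are in bits (base-2 logarithms). -/

/-- Probability that the random variable `Z` takes the value `z` under the pmf `p`. -/
noncomputable def pr {Ω α : Type*} [Fintype Ω] [DecidableEq α]
    (p : Ω → ℝ) (Z : Ω → α) (z : α) : ℝ :=
  ∑ ω ∈ Finset.univ.filter (fun ω => Z ω = z), p ω

/-- Shannon entropy (in bits) of the random variable `Z` under the pmf `p`. -/
noncomputable def ent {Ω α : Type*} [Fintype Ω] [DecidableEq α]
    (p : Ω → ℝ) (Z : Ω → α) : ℝ :=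
  -∑ z ∈ Finset.univ.image Z, pr p Z z * Real.logb 2 (pr p Z z)

/-- Mutual information `I(A; B)`. -/
noncomputable def mutInfo {Ω α β : Type*} [Fintype Ω] [DecidableEq α] [DecidableEq β]
    (p : Ω → ℝ) (A : Ω → α) (B : Ω → β) : ℝ :=
  ent p A + ent p B - ent p (fun ω => (A ω, B ω))

/-- Conditional entropy `H(A | C)`. -/
noncomputable def condEnt {Ω α γ : Type*} [Fintype Ω] [DecidableEq α] [DecidableEq γ]
    (p : Ω → ℝ) (A : Ω → α) (C : Ω → γ) : ℝ :=
  ent p (fun ω => (A ω, C ω)) - ent p C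

/-- Conditional mutual information `I(A; B | C)`. -/
noncomputable def condMutInfo {Ω α β γ : Type*} [Fintype Ω] [DecidableEq α] [DecidableEq β]
    [DecidableEq γ] (p : Ω → ℝ) (A : Ω → α) (B : Ω → β) (C : Ω → γ) : ℝ :=
  ent p (fun ω => (A ω, C ω)) + ent p (fun ω => (B ω, C ω))
    - ent p (fun ω => (A ω, B ω, C ω)) - ent p C

/-- `p` is a probability mass function on the finite type `Ω`. -/
def IsPMF {Ω : Type*} [Fintype Ω] (p : Ω → ℝ) : Prop :=
  (∀ ω, 0 ≤ p ω) ∧ ∑ ω, p ω = 1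

/-- Extension of a pmf on `{0, …, n}` to an integer-indexed function (zero out of range). -/
noncomputable def extZ {n : ℕ} (f : Fin (n + 1) → ℝ) (k : ℤ) : ℝ :=
  if h : 0 ≤ k ∧ k ≤ (n : ℤ) then f ⟨k.toNat, by omega⟩ else 0

/-! ### The single-letter quantity `J*` -/

/-- `I(S - X; X)` for independent `X ~ PX` on `{0,…,mx}` and `S ~ θ` on `{0,…,ms}`. -/
noncomputable def iidMI (mx ms : ℕ) (PX : Fin (mx + 1) → ℝ) (θ : Fin (ms + 1) → ℝ) : ℝ :=
  mutInfo (fun ω : Fin (mx + 1) × Fin (ms + 1) => PX ω.1 * θ ω.2)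
    (fun ω => ((ω.2 : ℕ) : ℤ) - ((ω.1 : ℕ) : ℤ)) (fun ω => ω.1)

/-- `J* = min over pmfs θ on 𝒮 of I(S - X; X)`. -/
noncomputable def Jstar (mx ms : ℕ) (PX : Fin (mx + 1) → ℝ) : ℝ :=
  sInf {r : ℝ | ∃ θ : Fin (ms + 1) → ℝ, IsPMF θ ∧ iidMI mx ms PX θ = r}

/-! ### The structured policy `b*` -/

/-- `ξ(w) = Σ_{(x,s) : s - x = w} PX(x) θ(s)`, the pmf of `W = S - X`. -/
noncomputable def xiOf (mx ms : ℕ) (PX : Fin (mx + 1) → ℝ) (θ : Fin (ms + 1) → ℝ)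
    (w : ℤ) : ℝ :=
  ∑ x : Fin (mx + 1), ∑ s : Fin (ms + 1),
    if ((s : ℕ) : ℤ) - ((x : ℕ) : ℤ) = w then PX x * θ s else 0

/-- The structured policy with respect to `(θ, ξ)`:
`b(y|w) = PX(y) θ(y + w) / ξ(w)` for `y ∈ 𝒳 ∩ 𝒴₀(w)` (when `ξ(w) > 0`), else `0`. -/
noncomputable def bstar (mx my ms : ℕ) (PX : Fin (mx + 1) → ℝ) (θ : Fin (ms + 1) → ℝ)
    (w : ℤ) (y : Fin (my + 1)) : ℝ :=
  if xiOf mx ms PX θ w = 0 then 0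
  else extZ PX ((y : ℕ) : ℤ) * extZ θ (((y : ℕ) : ℤ) + w) / xiOf mx ms PX θ w

/-! ### Trajectory spaces, policies and induced joint laws.
Time is indexed from `0`; `ω = (s₁, x, y)` records the initial battery state `S₁ = ω.1`,
the demands `X_{t+1} = ω.2.1 t` and the outputs `Y_{t+1} = ω.2.2 t` for `t = 0, …, T-1`. -/

/-- Trajectories of horizon `T`. -/
abbrev Traj (mx my ms T : ℕ) :=
  Fin (ms + 1) × (Fin T → Fin (mx + 1)) × (Fin T → Fin (my + 1))

variable {mx my ms T : ℕ}

/-- Demand at (0-based) time `t`, as an integer (junk value `0` for `t ≥ T`). -/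
def Xat (ω : Traj mx my ms T) (t : ℕ) : ℤ :=
  if h : t < T then ((ω.2.1 ⟨t, h⟩ : ℕ) : ℤ) else 0

/-- Output at (0-based) time `t`, as an integer (junk value `0` for `t ≥ T`). -/
def Yat (ω : Traj mx my ms T) (t : ℕ) : ℤ :=
  if h : t < T then ((ω.2.2 ⟨t, h⟩ : ℕ) : ℤ) else 0

/-- Battery state at (0-based) time `t`: `S_{t+1} = S_t + Y_t - X_t`, `Sat ω 0 = S₁`. -/
def Sat (ω : Traj mx my ms T) (t : ℕ) : ℤ :=
  ((ω.1 : ℕ) : ℤ) + ∑ i ∈ Finset.range t, (Yat ω i - Xat ω i)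

/-- `W_t = S_t - X_t`. -/
def Wat (ω : Traj mx my ms T) (t : ℕ) : ℤ := Sat ω t - Xat ω t

/-- A general causal (class `Q_A`) randomized battery policy:
`q_t(y_t | x^t, s^t, y^{t-1})`; since `s^t` is determined by `(s₁, x^{t-1}, y^{t-1})`,
the policy is a function of `(x^t, s₁, y^{t-1})`. -/
def PolicyA (mx my ms : ℕ) : Type :=
  (t : ℕ) → (Fin (t + 1) → Fin (mx + 1)) → Fin (ms + 1) → (Fin t → Fin (my + 1)) →
    Fin (my + 1) → ℝ

/-- A class-`Q_B` policy: `q_t(y_t | x_t, s_t, y^{t-1})`. -/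
def PolicyB (mx my ms : ℕ) : Type :=
  (t : ℕ) → Fin (mx + 1) → ℤ → (Fin t → Fin (my + 1)) → Fin (my + 1) → ℝ

/-- The battery state `S_t` computed from `s₁` and the history `(x^t, y^{t-1})`. -/
def hstate {t : ℕ} (s1 : Fin (ms + 1)) (x : Fin (t + 1) → Fin (mx + 1))
    (y : Fin t → Fin (my + 1)) : ℤ :=
  ((s1 : ℕ) : ℤ) + ∑ i : Fin t, (((y i : ℕ) : ℤ) - ((x i.castSucc : ℕ) : ℤ))

/-- Each `q_t(· | x^t, s^t, y^{t-1})` is a pmf on `𝒴`. -/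
def CondPMFA (q : PolicyA mx my ms) : Prop :=
  ∀ (t : ℕ) (x : Fin (t + 1) → Fin (mx + 1)) (s1 : Fin (ms + 1)) (y : Fin t → Fin (my + 1)),
    (∀ yt, 0 ≤ q t x s1 y yt) ∧ ∑ yt, q t x s1 y yt = 1

/-- Feasibility of a class-`Q_A` policy: conditional pmfs supported on
`𝒴₀(s_t - x_t) = {y ∈ 𝒴 : s_t - x_t + y ∈ 𝒮}`. -/
def FeasibleA (q : PolicyA mx my ms) : Prop :=
  CondPMFA q ∧
  ∀ (t : ℕ) (x : Fin (t + 1) → Fin (mx + 1)) (s1 : Fin (ms + 1)) (y : Fin t → Fin (my + 1)),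
    ∀ yt, q t x s1 y yt ≠ 0 →
      0 ≤ hstate s1 x y - ((x (Fin.last t) : ℕ) : ℤ) + ((yt : ℕ) : ℤ) ∧
      hstate s1 x y - ((x (Fin.last t) : ℕ) : ℤ) + ((yt : ℕ) : ℤ) ≤ (ms : ℤ)

/-- Each `q_t(· | x_t, s_t, y^{t-1})` is a pmf on `𝒴`. -/
def CondPMFB (q : PolicyB mx my ms) : Prop :=
  ∀ (t : ℕ) (xt : Fin (mx + 1)) (s : ℤ) (y : Fin t → Fin (my + 1)),
    (∀ yt, 0 ≤ q t xt s y yt) ∧ ∑ yt, q t xt s y yt = 1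

/-- Feasibility of a class-`Q_B` policy. -/
def FeasibleB (q : PolicyB mx my ms) : Prop :=
  CondPMFB q ∧
  ∀ (t : ℕ) (xt : Fin (mx + 1)) (s : ℤ) (y : Fin t → Fin (my + 1)),
    0 ≤ s → s ≤ (ms : ℤ) →
    ∀ yt, q t xt s y yt ≠ 0 →
      0 ≤ s - ((xt : ℕ) : ℤ) + ((yt : ℕ) : ℤ) ∧
      s - ((xt : ℕ) : ℤ) + ((yt : ℕ) : ℤ) ≤ (ms : ℤ)

/-- The demand prefix `x^t = (x_0, …, x_t)` of a trajectory. -/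
def prefX (ω : Traj mx my ms T) (t : Fin T) : Fin ((t : ℕ) + 1) → Fin (mx + 1) :=
  fun i => ω.2.1 ⟨(i : ℕ), lt_of_le_of_lt (Nat.lt_succ_iff.mp i.isLt) t.isLt⟩

/-- The output prefix `y^{t-1} = (y_0, …, y_{t-1})` of a trajectory. -/
def prefY (ω : Traj mx my ms T) (t : Fin T) : Fin (t : ℕ) → Fin (my + 1) :=
  fun i => ω.2.2 ⟨(i : ℕ), i.isLt.trans t.isLt⟩

/-- Joint law on trajectories induced by i.i.d. demand `PX`, initial battery pmf `PS1`
(independent of the demand), and a class-`Q_A` policy `q`. -/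
noncomputable def jointA (PS1 : Fin (ms + 1) → ℝ) (PX : Fin (mx + 1) → ℝ)
    (q : PolicyA mx my ms) (T : ℕ) (ω : Traj mx my ms T) : ℝ :=
  PS1 ω.1 * ∏ t : Fin T,
    (PX (ω.2.1 t) * q (t : ℕ) (prefX ω t) ω.1 (prefY ω t) (ω.2.2 t))

/-- Weight of a demand trajectory under a Markov chain `(PX1, Qm)`. -/
noncomputable def markovWt (PX1 : Fin (mx + 1) → ℝ) (Qm : Fin (mx + 1) → Fin (mx + 1) → ℝ)
    {T : ℕ} (x : Fin T → Fin (mx + 1)) : ℝ :=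
  ∏ t : Fin T,
    if _h : (t : ℕ) = 0 then PX1 (x t)
    else Qm (x ⟨(t : ℕ) - 1, lt_of_le_of_lt (Nat.sub_le _ _) t.isLt⟩) (x t)

/-- Joint law on trajectories induced by Markov demand and a class-`Q_A` policy. -/
noncomputable def jointAMarkov (PS1 : Fin (ms + 1) → ℝ) (PX1 : Fin (mx + 1) → ℝ)
    (Qm : Fin (mx + 1) → Fin (mx + 1) → ℝ) (q : PolicyA mx my ms) (T : ℕ)
    (ω : Traj mx my ms T) : ℝ :=
  PS1 ω.1 * markovWt PX1 Qm ω.2.1 *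
    ∏ t : Fin T, q (t : ℕ) (prefX ω t) ω.1 (prefY ω t) (ω.2.2 t)

/-- Joint law on trajectories induced by Markov demand and a class-`Q_B` policy. -/
noncomputable def jointBMarkov (PS1 : Fin (ms + 1) → ℝ) (PX1 : Fin (mx + 1) → ℝ)
    (Qm : Fin (mx + 1) → Fin (mx + 1) → ℝ) (q : PolicyB mx my ms) (T : ℕ)
    (ω : Traj mx my ms T) : ℝ :=
  PS1 ω.1 * markovWt PX1 Qm ω.2.1 *
    ∏ t : Fin T, q (t : ℕ) (ω.2.1 t) (Sat ω (t : ℕ)) (prefY ω t) (ω.2.2 t)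

/-- The memoryless time-invariant policy `q_t(y | x, s) = b*(y | s - x)`, as a member of the
class of general causal policies. -/
noncomputable def structuredPolicyA (mx my ms : ℕ) (PX : Fin (mx + 1) → ℝ)
    (θ : Fin (ms + 1) → ℝ) : PolicyA mx my ms :=
  fun t x s1 y yt => bstar mx my ms PX θ (hstate s1 x y - ((x (Fin.last t) : ℕ) : ℤ)) yt


/-- The pmf `ξ` of `W = S - X` when `(X, S) ~ π`. -/
noncomputable def xiPi (mx ms : ℕ) (π : Fin (mx + 1) × Fin (ms + 1) → ℝ) (w : ℤ) : ℝ :=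
  ∑ x : Fin (mx + 1), ∑ s : Fin (ms + 1),
    if ((s : ℕ) : ℤ) - ((x : ℕ) : ℤ) = w then π (x, s) else 0

/-- `b(y | w) = Σ_{(x,s) : s - x = w} a(y | x, s) π(x, s) / ξ(w)`. -/
noncomputable def bOf (mx my ms : ℕ) (π : Fin (mx + 1) × Fin (ms + 1) → ℝ)
    (a : Fin (mx + 1) → Fin (ms + 1) → Fin (my + 1) → ℝ) (w : ℤ) (y : Fin (my + 1)) : ℝ :=
  (∑ x : Fin (mx + 1), ∑ s : Fin (ms + 1),
      if ((s : ℕ) : ℤ) - ((x : ℕ) : ℤ) = w then a x s y * π (x, s) else 0)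
    / xiPi mx ms π w

/-- The joint pmf of `(W, Y)` with `W ~ ξ` (induced by `π`) and `Y | W ~ b`;
its mutual information is `I(b; ξ)`.  The index `i` encodes `w = i - mx ∈ 𝒲`. -/
noncomputable def pWY (mx my ms : ℕ) (π : Fin (mx + 1) × Fin (ms + 1) → ℝ)
    (a : Fin (mx + 1) → Fin (ms + 1) → Fin (my + 1) → ℝ)
    (ω : Fin (mx + ms + 1) × Fin (my + 1)) : ℝ :=
  ∑ x : Fin (mx + 1), ∑ s : Fin (ms + 1),
    if ((s : ℕ) : ℤ) - ((x : ℕ) : ℤ) = ((ω.1 : ℕ) : ℤ) - (mx : ℤ)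
      then π (x, s) * a x s ω.2 else 0

/-! Under `ã` the output depends on `(X, S)` only through `W = S - X`, and given `W = w` it is
drawn from `b(· | w)`, the `π`-average of `a(· | x, s)` over the fibre `s - x = w`. Hence
`(W, Y)` and `(W, Ỹ)` have the same law, which gives (1), (2) (as `S₊` is a function of
`(W, Y)`) and `I(W; Y) = I(W; Ỹ) = I(b; ξ)`. For `W = f(A)`, `I(A; Y) - I(W; Y)` is the mean of
`-log₂ r` with `r = p(a) p(w, y) / (p(a, y) p(w))`. Under `ã` the chain `(X, S) → W → Ỹ` is
Markov, so `r = 1` on the support and `I(X, S; Ỹ) = I(W; Ỹ)`; in general `E[r] ≤ 1` and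
`-log r ≥ 1 - r` give `I(X, S; Y) ≥ I(W; Y)`. -/

section Law

variable {Ω Ω' α β γ : Type*} [Fintype Ω] [Fintype Ω'] [DecidableEq α] [DecidableEq β]
  [DecidableEq γ] {p : Ω → ℝ} {q : Ω' → ℝ}

lemma pr_eq_sum_ite (p : Ω → ℝ) (Z : Ω → α) (z : α) :
    pr p Z z = ∑ ω, if Z ω = z then p ω else 0 :=
  Finset.sum_filter _ _

lemma pr_nonneg (hp : ∀ ω, 0 ≤ p ω) (Z : Ω → α) (z : α) : 0 ≤ pr p Z z :=
  Finset.sum_nonneg fun ω _ => hp ω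

lemma pr_pos (hp : ∀ ω, 0 ≤ p ω) (Z : Ω → α) {ω : Ω} (hω : p ω ≠ 0) : 0 < pr p Z (Z ω) :=
  ((hp ω).lt_of_ne' hω).trans_le <|
    Finset.single_le_sum (fun ω _ => hp ω) (Finset.mem_filter.2 ⟨Finset.mem_univ ω, rfl⟩)

lemma pr_apply_of_injective (p : Ω → ℝ) {Z : Ω → α} (hZ : Function.Injective Z) (ω : Ω) :
    pr p Z (Z ω) = p ω := by
  rw [pr, Finset.sum_eq_single_of_mem ω (by simp)]
  exact fun ω' hω' hne => absurd (hZ (Finset.mem_filter.1 hω').2) hne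

lemma pr_eq_zero_of_forall_ne (p : Ω → ℝ) {Z : Ω → α} {z : α} (h : ∀ ω, Z ω ≠ z) :
    pr p Z z = 0 :=
  Finset.sum_eq_zero fun ω hω => absurd (Finset.mem_filter.1 hω).2 (h ω)

lemma sum_image_pr_mul (p : Ω → ℝ) (Z : Ω → α) (h : α → ℝ) :
    ∑ z ∈ univ.image Z, pr p Z z * h z = ∑ ω, p ω * h (Z ω) := by
  rw [← Finset.sum_fiberwise_of_maps_to (fun ω _ => mem_image_of_mem Z (mem_univ ω))]
  refine Finset.sum_congr rfl fun z _ => ?_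
  rw [pr, Finset.sum_mul]
  exact Finset.sum_congr rfl fun ω hω => by rw [(mem_filter.1 hω).2]

lemma pr_comp_eq_sum (p : Ω → ℝ) {Z : Ω → α} {T : Finset α} (hT : ∀ ω, Z ω ∈ T)
    (f : α → β) (b : β) :
    pr p (fun ω => f (Z ω)) b = ∑ z ∈ T with f z = b, pr p Z z := by
  rw [pr, ← Finset.sum_fiberwise_of_maps_to (g := Z) (t := T.filter (f · = b))
    (fun ω hω => mem_filter.2 ⟨hT ω, (mem_filter.1 hω).2⟩)]
  refine Finset.sum_congr rfl fun z hz => ?_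
  rw [pr, filter_filter]
  refine Finset.sum_congr (filter_congr fun ω _ => ?_) fun _ _ => rfl
  constructor
  · exact fun h => h.2
  · rintro rfl; exact ⟨(mem_filter.1 hz).2, rfl⟩

lemma pr_comp_congr {Z : Ω → α} {Z' : Ω' → α} (h : ∀ z, pr p Z z = pr q Z' z)
    (f : α → β) (b : β) :
    pr p (fun ω => f (Z ω)) b = pr q (fun ω => f (Z' ω)) b := by
  rw [pr_comp_eq_sum p (T := univ.image Z ∪ univ.image Z') (fun ω => by simp) f b,
    pr_comp_eq_sum q (T := univ.image Z ∪ univ.image Z') (fun ω => by simp) f b]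
  exact Finset.sum_congr rfl fun z _ => h z

lemma sum_pr_pair (p : Ω → ℝ) (A : Ω → α) {B : Ω → β} {T : Finset β} (hT : ∀ ω, B ω ∈ T)
    (a : α) : ∑ b ∈ T, pr p (fun ω => (A ω, B ω)) (a, b) = pr p A a := by
  simp only [pr_eq_sum_ite, Prod.mk.injEq]
  rw [Finset.sum_comm]
  refine Finset.sum_congr rfl fun ω _ => ?_
  by_cases hA : A ω = a
  · simp [hA, hT ω]
  · simp [hA]

lemma pr_eq_of_eq_pr_comp {Z : Ω → α} {e : Ω' → α} (he : Function.Injective e)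
    (hZ : ∀ ω, Z ω ∈ Set.range e) (hq : ∀ ω', q ω' = pr p Z (e ω')) (z : α) :
    pr q e z = pr p Z z := by
  by_cases hz : z ∈ Set.range e
  · obtain ⟨ω', rfl⟩ := hz
    rw [pr_apply_of_injective q he, hq]
  · rw [pr_eq_zero_of_forall_ne q fun ω' h => hz ⟨ω', h⟩,
      pr_eq_zero_of_forall_ne p fun ω h => hz (by rw [← h]; exact hZ ω)]

end Law

section Information

variable {Ω Ω' α β γ : Type*} [Fintype Ω] [Fintype Ω'] [DecidableEq α] [DecidableEq β]
  [DecidableEq γ] {p : Ω → ℝ} {q : Ω' → ℝ}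

lemma ent_eq_neg_sum (p : Ω → ℝ) (Z : Ω → α) :
    ent p Z = -∑ ω, p ω * Real.logb 2 (pr p Z (Z ω)) := by
  rw [ent, sum_image_pr_mul p Z fun z => Real.logb 2 (pr p Z z)]

lemma ent_eq_neg_sum_of_subset (p : Ω → ℝ) {Z : Ω → α} {T : Finset α} (hT : ∀ ω, Z ω ∈ T) :
    ent p Z = -∑ z ∈ T, pr p Z z * Real.logb 2 (pr p Z z) := by
  rw [ent, Finset.sum_subset (fun z hz => ?_) fun z _ hz => ?_]
  · obtain ⟨ω, -, rfl⟩ := mem_image.1 hz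
    exact hT ω
  · have hZ : ∀ ω, Z ω ≠ z := fun ω h => hz (h ▸ mem_image_of_mem Z (mem_univ ω))
    rw [pr_eq_zero_of_forall_ne p hZ, zero_mul]

lemma ent_congr {Z : Ω → α} {Z' : Ω' → α} (h : ∀ z, pr p Z z = pr q Z' z) :
    ent p Z = ent q Z' := by
  rw [ent_eq_neg_sum_of_subset p (T := univ.image Z ∪ univ.image Z') (fun ω => by simp),
    ent_eq_neg_sum_of_subset q (T := univ.image Z ∪ univ.image Z') (fun ω => by simp)]
  simp only [h]

lemma mutInfo_congr {A : Ω → α} {B : Ω → β} {A' : Ω' → α} {B' : Ω' → β}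
    (h : ∀ a b, pr p (fun ω => (A ω, B ω)) (a, b) = pr q (fun ω => (A' ω, B' ω)) (a, b)) :
    mutInfo p A B = mutInfo q A' B' := by
  have hAB : ∀ z : α × β, pr p (fun ω => (A ω, B ω)) z = pr q (fun ω => (A' ω, B' ω)) z :=
    fun z => h z.1 z.2
  have hA : ent p A = ent q A' := ent_congr (pr_comp_congr hAB Prod.fst)
  have hB : ent p B = ent q B' := ent_congr (pr_comp_congr hAB Prod.snd)
  rw [mutInfo, mutInfo, hA, hB, ent_congr hAB]

/-- Equal to `1` on the support of `p` exactly when `A → W → Y` is a Markov chain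
(for `W` a function of `A`). -/
noncomputable def markovRatio (p : Ω → ℝ) (A : Ω → α) (W : Ω → β) (Y : Ω → γ) (ω : Ω) : ℝ :=
  pr p A (A ω) * pr p (fun ω => (W ω, Y ω)) (W ω, Y ω) /
    (pr p (fun ω => (A ω, Y ω)) (A ω, Y ω) * pr p W (W ω))

lemma mutInfo_sub_mutInfo (hp : ∀ ω, 0 ≤ p ω) (A : Ω → α) (W : Ω → β) (Y : Ω → γ) :
    mutInfo p A Y - mutInfo p W Y = -∑ ω, p ω * Real.logb 2 (markovRatio p A W Y ω) := by
  have hsplit : ∀ ω, p ω * Real.logb 2 (markovRatio p A W Y ω) =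
      p ω * Real.logb 2 (pr p A (A ω))
        + p ω * Real.logb 2 (pr p (fun ω => (W ω, Y ω)) (W ω, Y ω))
        - p ω * Real.logb 2 (pr p (fun ω => (A ω, Y ω)) (A ω, Y ω))
        - p ω * Real.logb 2 (pr p W (W ω)) := by
    intro ω
    by_cases hω : p ω = 0
    · simp [hω]
    have hA := (pr_pos hp A hω).ne'
    have hW := (pr_pos hp W hω).ne'
    have hAY := (pr_pos hp (fun ω => (A ω, Y ω)) hω).ne'
    have hWY := (pr_pos hp (fun ω => (W ω, Y ω)) hω).ne'
    rw [markovRatio, Real.logb_div (mul_ne_zero hA hWY) (mul_ne_zero hAY hW),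
      Real.logb_mul hA hWY, Real.logb_mul hAY hW]
    ring
  rw [Finset.sum_congr rfl fun ω _ => hsplit ω]
  simp only [mutInfo, ent_eq_neg_sum, Finset.sum_add_distrib, Finset.sum_sub_distrib]
  ring

lemma mutInfo_eq_of_markovRatio_eq_one (hp : ∀ ω, 0 ≤ p ω) {A : Ω → α} {W : Ω → β}
    {Y : Ω → γ} (h : ∀ ω, p ω ≠ 0 → markovRatio p A W Y ω = 1) :
    mutInfo p A Y = mutInfo p W Y := by
  have hdiff := mutInfo_sub_mutInfo hp A W Y
  rw [Finset.sum_eq_zero fun ω _ => ?_] at hdiff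
  · linarith
  by_cases hω : p ω = 0
  · rw [hω, zero_mul]
  · rw [h ω hω, Real.logb_one, mul_zero]

lemma sum_mul_markovRatio_le_one (hp : ∀ ω, 0 ≤ p ω) (hp1 : ∑ ω, p ω = 1) (A : Ω → α)
    (f : α → β) (Y : Ω → γ) :
    ∑ ω, p ω * markovRatio p A (fun ω => f (A ω)) Y ω ≤ 1 := by
  set W := fun ω => f (A ω)
  set pA := pr p A
  set pW := pr p W
  set pAY := pr p (fun ω => (A ω, Y ω))
  set pWY := pr p (fun ω => (W ω, Y ω))
  have hQ : ∀ z : α × γ, 0 ≤ pA z.1 * pWY (f z.1, z.2) / pW (f z.1) := fun z =>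
    div_nonneg (mul_nonneg (pr_nonneg hp _ _) (pr_nonneg hp _ _)) (pr_nonneg hp _ _)
  calc ∑ ω, p ω * markovRatio p A W Y ω
      = ∑ z ∈ univ.image (fun ω => (A ω, Y ω)),
          pAY z * (pA z.1 * pWY (f z.1, z.2) / (pAY z * pW (f z.1))) :=
        (sum_image_pr_mul p (fun ω => (A ω, Y ω))
          fun z => pA z.1 * pWY (f z.1, z.2) / (pAY z * pW (f z.1))).symm
    _ ≤ ∑ z ∈ univ.image (fun ω => (A ω, Y ω)), pA z.1 * pWY (f z.1, z.2) / pW (f z.1) := by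
        refine Finset.sum_le_sum fun z _ => ?_
        by_cases hz : pAY z = 0
        · rw [hz, zero_mul]
          exact hQ z
        · rw [← mul_div_assoc, mul_div_mul_left _ _ hz, mul_comm]
    _ ≤ ∑ z ∈ univ.image A ×ˢ univ.image Y, pA z.1 * pWY (f z.1, z.2) / pW (f z.1) := by
        refine Finset.sum_le_sum_of_subset_of_nonneg (fun z hz => ?_) fun z _ _ => hQ z
        obtain ⟨ω, -, rfl⟩ := mem_image.1 hz
        exact mem_product.2 ⟨mem_image_of_mem A (mem_univ ω), mem_image_of_mem Y (mem_univ ω)⟩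
    _ = ∑ a ∈ univ.image A, pA a / pW (f a) * ∑ y ∈ univ.image Y, pWY (f a, y) := by
        rw [Finset.sum_product]
        refine Finset.sum_congr rfl fun a _ => ?_
        rw [Finset.mul_sum]
        exact Finset.sum_congr rfl fun y _ => by ring
    _ = ∑ a ∈ univ.image A, pA a / pW (f a) * pW (f a) := by
        simp only [pWY, pW, sum_pr_pair p W fun ω => mem_image_of_mem Y (mem_univ ω)]
    _ ≤ ∑ a ∈ univ.image A, pA a := by
        refine Finset.sum_le_sum fun a _ => ?_
        by_cases hw : pW (f a) = 0
        · rw [hw, mul_zero]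
          exact pr_nonneg hp _ _
        · rw [div_mul_cancel₀ _ hw]
    _ = 1 := by simpa [hp1] using sum_image_pr_mul p A fun _ => 1

lemma mutInfo_comp_le (hp : ∀ ω, 0 ≤ p ω) (hp1 : ∑ ω, p ω = 1) (A : Ω → α) (f : α → β)
    (Y : Ω → γ) : mutInfo p (fun ω => f (A ω)) Y ≤ mutInfo p A Y := by
  set W := fun ω => f (A ω)
  have hterm : ∀ ω, p ω * (1 - markovRatio p A W Y ω) / Real.log 2
      ≤ -(p ω * Real.logb 2 (markovRatio p A W Y ω)) := by
    intro ω
    by_cases hω : p ω = 0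
    · simp [hω]
    have hr : 0 < markovRatio p A W Y ω :=
      div_pos (mul_pos (pr_pos hp A hω) (pr_pos hp _ hω))
        (mul_pos (pr_pos hp _ hω) (pr_pos hp W hω))
    calc p ω * (1 - markovRatio p A W Y ω) / Real.log 2
        ≤ p ω * -Real.log (markovRatio p A W Y ω) / Real.log 2 := by
          gcongr
          · exact hp ω
          · linarith [Real.log_le_sub_one_of_pos hr]
      _ = -(p ω * Real.logb 2 (markovRatio p A W Y ω)) := by
          rw [Real.logb]
          ring
  have hsum : 0 ≤ ∑ ω, p ω * (1 - markovRatio p A W Y ω) / Real.log 2 := by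
    rw [← Finset.sum_div]
    refine div_nonneg ?_ (Real.log_pos one_lt_two).le
    simp only [mul_sub, mul_one, Finset.sum_sub_distrib, hp1]
    linarith [sum_mul_markovRatio_le_one hp hp1 A f Y]
  have hdiff := mutInfo_sub_mutInfo hp A W Y
  rw [← Finset.sum_neg_distrib] at hdiff
  linarith [Finset.sum_le_sum fun ω (_ : ω ∈ univ) => hterm ω]

end Information

section Fiber

variable {ι γ δ : Type*} [Fintype ι] [DecidableEq δ]

lemma pr_mul_comp (p : ι → ℝ) (g : ι → δ) (h : δ → ℝ) (w : δ) :
    pr (fun u => p u * h (g u)) g w = pr p g w * h w := by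
  rw [pr, pr, Finset.sum_mul]
  exact Finset.sum_congr rfl fun u hu => by rw [(mem_filter.1 hu).2]

/-- Junk value `0` on `π`-null fibres. -/
noncomputable def fiberAvg (π : ι → ℝ) (k : ι → γ → ℝ) (g : ι → δ) (w : δ) (y : γ) : ℝ :=
  pr (fun u => π u * k u y) g w / pr π g w

variable {π : ι → ℝ} {k : ι → γ → ℝ}

lemma fiberAvg_nonneg (hπ : ∀ u, 0 ≤ π u) (hk : ∀ u y, 0 ≤ k u y) (g : ι → δ) (w : δ)
    (y : γ) : 0 ≤ fiberAvg π k g w y :=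
  div_nonneg (pr_nonneg (fun u => mul_nonneg (hπ u) (hk u y)) g w) (pr_nonneg hπ g w)

lemma pr_mul_fiberAvg (hπ : ∀ u, 0 ≤ π u) (g : ι → δ) (w : δ) (y : γ) :
    pr π g w * fiberAvg π k g w y = pr (fun u => π u * k u y) g w := by
  by_cases h : pr π g w = 0
  · have hzero : ∀ u ∈ univ.filter (g · = w), π u = 0 :=
      (Finset.sum_eq_zero_iff_of_nonneg fun u _ => hπ u).1 h
    rw [h, zero_mul, pr, Finset.sum_eq_zero fun u hu => by rw [hzero u hu, zero_mul]]
  · exact mul_div_cancel₀ _ h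

end Fiber

section KernelLaw

variable {α β γ δ : Type*} [Fintype α] [Fintype β] [Fintype γ] [DecidableEq δ]

lemma pr_prod_eq_sum_sum (f : α × β → ℝ) (g : α × β → δ) (w : δ) :
    pr f g w = ∑ x, ∑ s, if g (x, s) = w then f (x, s) else 0 := by
  rw [pr_eq_sum_ite, Fintype.sum_prod_type]

def kernelLaw (π : α × β → ℝ) (k : α × β → γ → ℝ) (ω : α × β × γ) : ℝ :=
  π (ω.1, ω.2.1) * k (ω.1, ω.2.1) ω.2.2

variable {π : α × β → ℝ} {k : α × β → γ → ℝ}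

lemma isPMF_kernelLaw (hπ : IsPMF π) (hk : ∀ u, IsPMF (k u)) : IsPMF (kernelLaw π k) := by
  refine ⟨fun ω => mul_nonneg (hπ.1 _) ((hk _).1 _), ?_⟩
  simp only [kernelLaw, Fintype.sum_prod_type, ← Finset.mul_sum, (hk _).2, mul_one]
  rw [← Fintype.sum_prod_type' (fun x s => π (x, s)), hπ.2]

lemma pr_kernelLaw_comp (g : α × β → δ) (w : δ) :
    pr (kernelLaw π k) (fun ω => g (ω.1, ω.2.1)) w = pr (fun u => π u * ∑ y, k u y) g w := by
  simp only [pr_eq_sum_ite, Fintype.sum_prod_type, kernelLaw, Finset.mul_sum,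
    Finset.sum_ite_irrel, Finset.sum_const_zero]

variable [DecidableEq γ]

lemma pr_kernelLaw_comp_pair (g : α × β → δ) (w : δ) (y : γ) :
    pr (kernelLaw π k) (fun ω => (g (ω.1, ω.2.1), ω.2.2)) (w, y)
      = pr (fun u => π u * k u y) g w := by
  simp only [pr_eq_sum_ite, Fintype.sum_prod_type, kernelLaw, Prod.mk.injEq, ite_and,
    Finset.sum_ite_irrel, Finset.sum_const_zero, Finset.sum_ite_eq',
    Finset.mem_univ, if_true]

lemma pr_kernelLaw_fiberAvg_pair (hπ : ∀ u, 0 ≤ π u) (g : α × β → δ) (w : δ) (y : γ) :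
    pr (kernelLaw π fun u => fiberAvg π k g (g u)) (fun ω => (g (ω.1, ω.2.1), ω.2.2)) (w, y)
      = pr (kernelLaw π k) (fun ω => (g (ω.1, ω.2.1), ω.2.2)) (w, y) := by
  rw [pr_kernelLaw_comp_pair, pr_kernelLaw_comp_pair,
    pr_mul_comp π g (fun w => fiberAvg π k g w y), pr_mul_fiberAvg hπ]

variable [DecidableEq α] [DecidableEq β]

lemma mutInfo_kernelLaw_comp_eq (hπ : ∀ u, 0 ≤ π u) {κ : δ → γ → ℝ} (hκ : ∀ w y, 0 ≤ κ w y)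
    (g : α × β → δ) :
    mutInfo (kernelLaw π fun u => κ (g u)) (fun ω => (ω.1, ω.2.1)) (fun ω => ω.2.2)
      = mutInfo (kernelLaw π fun u => κ (g u)) (fun ω => g (ω.1, ω.2.1)) (fun ω => ω.2.2) := by
  set p := kernelLaw π fun u => κ (g u)
  have hp : ∀ ω, 0 ≤ p ω := fun ω => mul_nonneg (hπ _) (hκ _ _)
  refine mutInfo_eq_of_markovRatio_eq_one hp fun ω hω => ?_
  set u := (ω.1, ω.2.1)
  have hU : pr p (fun ω => (ω.1, ω.2.1)) u = π u * ∑ y, κ (g u) y :=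
    (pr_kernelLaw_comp (fun u => u) u).trans (pr_apply_of_injective _ Function.injective_id u)
  have hUY : pr p (fun ω => ((ω.1, ω.2.1), ω.2.2)) (u, ω.2.2) = π u * κ (g u) ω.2.2 :=
    pr_apply_of_injective p (Z := fun ω => ((ω.1, ω.2.1), ω.2.2))
      (fun ω ω' h => by simp_all [Prod.ext_iff]) ω
  have hW : pr p (fun ω => g (ω.1, ω.2.1)) (g u) = pr π g (g u) * ∑ y, κ (g u) y :=
    (pr_kernelLaw_comp g _).trans (pr_mul_comp π g (fun w => ∑ y, κ w y) _)
  have hWY : pr p (fun ω => (g (ω.1, ω.2.1), ω.2.2)) (g u, ω.2.2)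
      = pr π g (g u) * κ (g u) ω.2.2 :=
    (pr_kernelLaw_comp_pair g _ _).trans (pr_mul_comp π g (fun w => κ w ω.2.2) _)
  have hden := mul_ne_zero (pr_pos hp (fun ω => ((ω.1, ω.2.1), ω.2.2)) hω).ne'
    (pr_pos hp (fun ω => g (ω.1, ω.2.1)) hω).ne'
  rw [markovRatio, div_eq_one_iff_eq hden, hU, hUY, hW, hWY]
  ring

end KernelLaw

section OneStep

variable {mx my ms : ℕ}

def sMinusX (u : Fin (mx + 1) × Fin (ms + 1)) : ℤ := ((u.2 : ℕ) : ℤ) - ((u.1 : ℕ) : ℤ)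

lemma xiPi_eq_pr (π : Fin (mx + 1) × Fin (ms + 1) → ℝ) (w : ℤ) :
    xiPi mx ms π w = pr π sMinusX w :=
  (pr_prod_eq_sum_sum π sMinusX w).symm

lemma bOf_eq_fiberAvg (π : Fin (mx + 1) × Fin (ms + 1) → ℝ)
    (a : Fin (mx + 1) → Fin (ms + 1) → Fin (my + 1) → ℝ) (w : ℤ) (y : Fin (my + 1)) :
    bOf mx my ms π a w y = fiberAvg π (fun u => a u.1 u.2) sMinusX w y := by
  rw [bOf, fiberAvg, pr_prod_eq_sum_sum, xiPi_eq_pr]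
  simp only [sMinusX, mul_comm]

lemma pr_pWY (π : Fin (mx + 1) × Fin (ms + 1) → ℝ)
    (a : Fin (mx + 1) → Fin (ms + 1) → Fin (my + 1) → ℝ) (w : ℤ) (y : Fin (my + 1)) :
    pr (pWY mx my ms π a) (fun ω => (((ω.1 : ℕ) : ℤ) - (mx : ℤ), ω.2)) (w, y)
      = pr (kernelLaw π fun u => a u.1 u.2) (fun ω => (sMinusX (ω.1, ω.2.1), ω.2.2))
          (w, y) := by
  refine pr_eq_of_eq_pr_comp (fun i j h => ?_) (fun ω => ?_) (fun ω' => ?_) (w, y)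
  · simp only [Prod.mk.injEq, sub_left_inj, Nat.cast_inj] at h
    exact Prod.ext (Fin.ext h.1) h.2
  · refine ⟨(⟨(sMinusX (ω.1, ω.2.1) + mx).toNat, ?_⟩, ω.2.2), ?_⟩
    · have := ω.2.1.isLt
      simp only [sMinusX]
      omega
    · have := ω.1.isLt
      simp only [sMinusX, Prod.mk.injEq, and_true]
      omega
  · rw [pr_kernelLaw_comp_pair, pr_prod_eq_sum_sum]
    rfl

end OneStep

theorem one_step_reduction_general (mx my ms : ℕ)
    (π : Fin (mx + 1) × Fin (ms + 1) → ℝ) (hπ : IsPMF π)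
    (a : Fin (mx + 1) → Fin (ms + 1) → Fin (my + 1) → ℝ)
    (ha : ∀ x s, IsPMF (a x s)) :
    -- the two joint laws on `𝒳 × 𝒮 × 𝒴`
    let p : Fin (mx + 1) × Fin (ms + 1) × Fin (my + 1) → ℝ :=
      fun ω => π (ω.1, ω.2.1) * a ω.1 ω.2.1 ω.2.2
    let pt : Fin (mx + 1) × Fin (ms + 1) × Fin (my + 1) → ℝ :=
      fun ω => π (ω.1, ω.2.1) *
        bOf mx my ms π a (((ω.2.1 : ℕ) : ℤ) - ((ω.1 : ℕ) : ℤ)) ω.2.2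
    let Wv : Fin (mx + 1) × Fin (ms + 1) × Fin (my + 1) → ℤ :=
      fun ω => ((ω.2.1 : ℕ) : ℤ) - ((ω.1 : ℕ) : ℤ)
    let Yv : Fin (mx + 1) × Fin (ms + 1) × Fin (my + 1) → Fin (my + 1) := fun ω => ω.2.2
    let Splus : Fin (mx + 1) × Fin (ms + 1) × Fin (my + 1) → ℤ :=
      fun ω => Wv ω + ((ω.2.2 : ℕ) : ℤ)
    -- (1) identical joint laws of (W, Y), hence identical output marginals
    ((∀ (w : ℤ) (y : Fin (my + 1)),
        pr p (fun ω => (Wv ω, Yv ω)) (w, y) = pr pt (fun ω => (Wv ω, Yv ω)) (w, y)) ∧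
      (∀ y : Fin (my + 1), pr p Yv y = pr pt Yv y)) ∧
    -- (2) identical conditional law of S₊ given the output
    (∀ y : Fin (my + 1), pr p Yv y ≠ 0 →
      ∀ s : ℤ, pr p (fun ω => (Splus ω, Yv ω)) (s, y) / pr p Yv y
        = pr pt (fun ω => (Splus ω, Yv ω)) (s, y) / pr pt Yv y) ∧
    -- (3) the information inequalities and identities
    (mutInfo p (fun ω => (ω.1, ω.2.1)) Yv ≥ mutInfo p Wv Yv ∧
      mutInfo p Wv Yv = mutInfo pt (fun ω => (ω.1, ω.2.1)) Yv ∧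
      mutInfo pt (fun ω => (ω.1, ω.2.1)) Yv = mutInfo pt Wv Yv ∧
      mutInfo pt Wv Yv
        = mutInfo (pWY mx my ms π a) (fun ω => ((ω.1 : ℕ) : ℤ) - (mx : ℤ))
            (fun ω => ω.2)) := by
  intro p pt Wv Yv Splus
  have hp : p = kernelLaw π fun u => a u.1 u.2 := rfl
  have hpt : pt = kernelLaw π fun u => fiberAvg π (fun u => a u.1 u.2) sMinusX (sMinusX u) :=
    funext fun ω => congrArg (π (ω.1, ω.2.1) * ·) (bOf_eq_fiberAvg π a _ _)
  have hWv : Wv = fun ω => sMinusX (ω.1, ω.2.1) := rfl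
  have hYv : Yv = fun ω => ω.2.2 := rfl
  have hSplus : Splus = fun ω => Wv ω + ((ω.2.2 : ℕ) : ℤ) := rfl
  clear_value p pt Splus Wv Yv
  subst hp hpt hSplus hWv hYv
  have hWY := fun w y =>
    (pr_kernelLaw_fiberAvg_pair hπ.1 (k := fun u => a u.1 u.2) sMinusX w y).symm
  have hWY' : ∀ z : ℤ × Fin (my + 1), _ := fun z => hWY z.1 z.2
  have hY : ∀ y, _ := pr_comp_congr hWY' Prod.snd
  have hpmf := isPMF_kernelLaw hπ (k := fun u => a u.1 u.2) fun u => ha u.1 u.2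
  have hb := fiberAvg_nonneg hπ.1 (k := fun u => a u.1 u.2) (fun u => (ha u.1 u.2).1) sMinusX
  refine ⟨⟨hWY, hY⟩, fun y _ s => ?_, ?_, ?_, ?_, ?_⟩
  · rw [pr_comp_congr hWY' (fun z => (z.1 + ((z.2 : ℕ) : ℤ), z.2)) (s, y), hY]
  · exact mutInfo_comp_le hpmf.1 hpmf.2 _ sMinusX _
  · exact (mutInfo_congr hWY).trans (mutInfo_kernelLaw_comp_eq hπ.1 hb sMinusX).symm
  · exact mutInfo_kernelLaw_comp_eq hπ.1 hb sMinusX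
  · exact (mutInfo_congr hWY).symm.trans (mutInfo_congr (pr_pWY π a)).symm

/-- One-step reduction lemma: with `(X, S) ~ π`, `W = S - X`, `Y` generated
by a feasible conditional pmf `a`, and `ã(y | x, s) = b(y | s - x)`:
(1) `(W, Y)` and `(W, Ỹ)` have the same joint law (hence same output marginals);
(2) the conditional law of `S₊ = W + Y` given `Y` is invariant;
(3) `I(X, S; Y) ≥ I(W; Y) = I(X, S; Ỹ) = I(W; Ỹ) = I(b; ξ)`. -/
theorem one_step_reduction (mx my ms : ℕ) (hxy : mx ≤ my)
    (π : Fin (mx + 1) × Fin (ms + 1) → ℝ) (hπ : IsPMF π)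
    (a : Fin (mx + 1) → Fin (ms + 1) → Fin (my + 1) → ℝ)
    (ha : ∀ x s, IsPMF (a x s))
    (hsupp : ∀ x s y, a x s y ≠ 0 →
      0 ≤ ((s : ℕ) : ℤ) - ((x : ℕ) : ℤ) + ((y : ℕ) : ℤ) ∧
      ((s : ℕ) : ℤ) - ((x : ℕ) : ℤ) + ((y : ℕ) : ℤ) ≤ (ms : ℤ)) :
    -- the two joint laws on `𝒳 × 𝒮 × 𝒴`
    let p : Fin (mx + 1) × Fin (ms + 1) × Fin (my + 1) → ℝ :=
      fun ω => π (ω.1, ω.2.1) * a ω.1 ω.2.1 ω.2.2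
    let pt : Fin (mx + 1) × Fin (ms + 1) × Fin (my + 1) → ℝ :=
      fun ω => π (ω.1, ω.2.1) *
        bOf mx my ms π a (((ω.2.1 : ℕ) : ℤ) - ((ω.1 : ℕ) : ℤ)) ω.2.2
    let Wv : Fin (mx + 1) × Fin (ms + 1) × Fin (my + 1) → ℤ :=
      fun ω => ((ω.2.1 : ℕ) : ℤ) - ((ω.1 : ℕ) : ℤ)
    let Yv : Fin (mx + 1) × Fin (ms + 1) × Fin (my + 1) → Fin (my + 1) := fun ω => ω.2.2
    let Splus : Fin (mx + 1) × Fin (ms + 1) × Fin (my + 1) → ℤ :=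
      fun ω => Wv ω + ((ω.2.2 : ℕ) : ℤ)
    -- (1) identical joint laws of (W, Y), hence identical output marginals
    ((∀ (w : ℤ) (y : Fin (my + 1)),
        pr p (fun ω => (Wv ω, Yv ω)) (w, y) = pr pt (fun ω => (Wv ω, Yv ω)) (w, y)) ∧
      (∀ y : Fin (my + 1), pr p Yv y = pr pt Yv y)) ∧
    -- (2) identical conditional law of S₊ given the output
    (∀ y : Fin (my + 1), pr p Yv y ≠ 0 →
      ∀ s : ℤ, pr p (fun ω => (Splus ω, Yv ω)) (s, y) / pr p Yv y
        = pr pt (fun ω => (Splus ω, Yv ω)) (s, y) / pr pt Yv y) ∧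
    -- (3) the information inequalities and identities
    (mutInfo p (fun ω => (ω.1, ω.2.1)) Yv ≥ mutInfo p Wv Yv ∧
      mutInfo p Wv Yv = mutInfo pt (fun ω => (ω.1, ω.2.1)) Yv ∧
      mutInfo pt (fun ω => (ω.1, ω.2.1)) Yv = mutInfo pt Wv Yv ∧
      mutInfo pt Wv Yv
        = mutInfo (pWY mx my ms π a) (fun ω => ((ω.1 : ℕ) : ℤ) - (mx : ℤ))
            (fun ω => ω.2)) :=
  one_step_reduction_general mx my ms π hπ a ha

end SmartMeter
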